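/- For the reduced Oseen bilinear form A_red on the diagonal, if ∇·a = 0 and (τ_M (a·∇u^h + ∇p̃), ∇·(2ν∇^s u^h)) ≥ −½(τ_M(a·∇u^h + ∇p̃), a·∇u^h + ∇p̃) − ½(τ_M ∇·(2ν∇^s u^h), ∇·(2ν∇^s u^h)) (Young's inequality) and k(u^h,u^h) ≥ (τ_M ∇·(2ν∇^s u^h), ∇·(2ν∇^s u^h)) (from the inverse estimate and the definition of τ_M), then A_red((u^h,p^h,p̃),(u^h,p^h,p̃)) ≥ ¼ k(u^h,u^h) + ½ ‖τ_M^{1/2}(a·∇u^h + ∇p̃)‖² + ¼ ‖τ_M^{1/2} ∇·(2ν∇^s u^h)‖² + ‖τ_C^{1/2} ∇·u^h‖². -/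

import Mathlib

open MeasureTheory
open scoped RealInnerProductSpace

/-- Euclidean space ℝ^d. -/
abbrev E (d : ℕ) := EuclideanSpace ℝ (Fin d)

/-- Advective derivative a·∇u. -/
noncomputable def adv {d : ℕ} (a : E d) (u : E d → E d) (x : E d) : E d := fderiv ℝ u x a

/-- (i,j) entry of the symmetric gradient ∇^s u. -/
noncomputable def sg {d : ℕ} (u : E d → E d) (x : E d) (i j : Fin d) : ℝ :=
  (fderiv ℝ u x (EuclideanSpace.single i 1) j +
    fderiv ℝ u x (EuclideanSpace.single j 1) i) / 2

/-- Divergence ∇·u. -/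
noncomputable def divg {d : ℕ} (u : E d → E d) (x : E d) : ℝ :=
  ∑ i, fderiv ℝ u x (EuclideanSpace.single i 1) i

/-- Viscous term ∇·(2ν∇^s u). -/
noncomputable def divVisc {d : ℕ} (ν : ℝ) (u : E d → E d) (x : E d) : E d :=
  (WithLp.equiv 2 (Fin d → ℝ)).symm fun i =>
    ∑ j, fderiv ℝ (fun y => 2 * ν * sg u y i j) x (EuclideanSpace.single j 1)

/-- Convective form c(a,u,v) = ∫_Ω (a·∇u)·v. -/
noncomputable def cForm {d : ℕ} (Ω : Set (E d)) (a : E d) (u v : E d → E d) : ℝ :=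
  ∫ x in Ω, ⟪adv a u x, v x⟫

/-- Diffusive form k(u,v) = ∫_Ω 2ν∇^s u : ∇^s v. -/
noncomputable def kForm {d : ℕ} (Ω : Set (E d)) (ν : ℝ) (u v : E d → E d) : ℝ :=
  ∫ x in Ω, 2 * ν * ∑ i, ∑ j, sg u x i j * sg v x i j

/-- Constraint form b(v,q) = ∫_Ω (∇·v) q. -/
noncomputable def bForm {d : ℕ} (Ω : Set (E d)) (v : E d → E d) (q : E d → ℝ) : ℝ :=
  ∫ x in Ω, divg v x * q x

/-- The reduced Oseen bilinear form A_red. -/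
noncomputable def Ared {d : ℕ} (Ω : Set (E d)) (a : E d) (ν τM τC : ℝ)
    (u : E d → E d) (p pt : E d → ℝ) (v : E d → E d) (q qt : E d → ℝ) : ℝ :=
  cForm Ω a u v + kForm Ω ν u v - bForm Ω v p + bForm Ω u q
    + (∫ x in Ω, τM * ⟪adv a u x - divVisc ν u x + gradient pt x,
        adv a v x + gradient qt x⟫)
    + ∫ x in Ω, τC * (divg u x * divg v x)

/-! Because `a` is constant and `u` vanishes near `∂Ω`, integration by parts gives
`c(a,u,u) = ∫ (a·∇u)·u = 0`, and the two pressure terms cancel on the diagonal. Writing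
`X = a·∇u + ∇p̃` and `V = ∇·(2ν∇^s u)`, the stabilization term is `τ_M (X - V, X)`, and pointwise
`(X - V)·X = ½|X|² - ½|V|² + ½|X - V|² ≥ ½|X|² - ½|V|²`. The inverse estimate
`k(u,u) ≥ ‖τ_M^{1/2} V‖²` then trades `¾ k(u,u)` for `¾ ‖τ_M^{1/2} V‖²`. -/

theorem ContDiff.continuous_gradient {F : Type*} [NormedAddCommGroup F] [InnerProductSpace ℝ F]
    [CompleteSpace F] {f : F → ℝ} (hf : ContDiff ℝ 1 f) : Continuous (gradient f) :=
  (InnerProductSpace.toDual ℝ F).symm.continuous.comp (hf.continuous_fderiv one_ne_zero)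

theorem Continuous.integrableOn_of_isBounded {X F : Type*} [PseudoMetricSpace X] [ProperSpace X]
    [MeasurableSpace X] [OpensMeasurableSpace X] {μ : Measure X} [IsFiniteMeasureOnCompacts μ]
    [NormedAddCommGroup F] {f : X → F} {s : Set X} (hf : Continuous f)
    (hs : Bornology.IsBounded s) : IntegrableOn f s μ :=
  (hf.locallyIntegrable.integrableOn_isCompact hs.isCompact_closure).mono_set subset_closure

theorem half_sq_norm_sub_half_sq_norm_le_inner_sub_self {F : Type*} [NormedAddCommGroup F]
    [InnerProductSpace ℝ F] (x y : F) : ‖x‖ ^ 2 / 2 - ‖y‖ ^ 2 / 2 ≤ ⟪x - y, x⟫ := by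
  have hsq := norm_sub_sq_real x y
  rw [inner_sub_left, real_inner_self_eq_norm_sq, real_inner_comm]
  nlinarith [sq_nonneg ‖x - y‖]

theorem half_setIntegral_sub_le_setIntegral_inner_sub_self {α F : Type*} [MeasurableSpace α]
    {μ : Measure α} {s : Set α} [NormedAddCommGroup F] [InnerProductSpace ℝ F] {τ : ℝ}
    (hτ : 0 ≤ τ) {X V : α → F} (hX : IntegrableOn (fun x => τ * ‖X x‖ ^ 2) s μ)
    (hV : IntegrableOn (fun x => τ * ‖V x‖ ^ 2) s μ)
    (hXV : IntegrableOn (fun x => τ * ⟪X x - V x, X x⟫) s μ) :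
    (1 / 2) * (∫ x in s, τ * ‖X x‖ ^ 2 ∂μ) - (1 / 2) * ∫ x in s, τ * ‖V x‖ ^ 2 ∂μ ≤
      ∫ x in s, τ * ⟪X x - V x, X x⟫ ∂μ := by
  have hpt : ∀ x, (1 / 2) * (τ * ‖X x‖ ^ 2) - (1 / 2) * (τ * ‖V x‖ ^ 2) ≤
      τ * ⟪X x - V x, X x⟫ := fun x => by
    nlinarith [half_sq_norm_sub_half_sq_norm_le_inner_sub_self (X x) (V x)]
  calc (1 / 2) * (∫ x in s, τ * ‖X x‖ ^ 2 ∂μ) - (1 / 2) * ∫ x in s, τ * ‖V x‖ ^ 2 ∂μ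
      = ∫ x in s, ((1 / 2) * (τ * ‖X x‖ ^ 2) - (1 / 2) * (τ * ‖V x‖ ^ 2)) ∂μ := by
        rw [integral_sub (hX.const_mul _) (hV.const_mul _),
          integral_const_mul (1 / 2 : ℝ) (fun x => τ * ‖X x‖ ^ 2),
          integral_const_mul (1 / 2 : ℝ) (fun x => τ * ‖V x‖ ^ 2)]
    _ ≤ ∫ x in s, τ * ⟪X x - V x, X x⟫ ∂μ :=
        setIntegral_mono (by exact (hX.const_mul _).sub (hV.const_mul _)) hXV hpt

theorem integral_inner_fderiv_self_eq_zero {G F : Type*} [NormedAddCommGroup G]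
    [NormedSpace ℝ G] [FiniteDimensional ℝ G] [MeasurableSpace G] [BorelSpace G]
    {μ : Measure G} [μ.IsAddHaarMeasure] [NormedAddCommGroup F] [InnerProductSpace ℝ F]
    {u : G → F} (hu : ContDiff ℝ 1 u) (hsupp : HasCompactSupport u) (v : G) :
    ∫ x, ⟪fderiv ℝ u x v, u x⟫ ∂μ = 0 := by
  have hdu : Continuous fun x => fderiv ℝ u x v :=
    (hu.continuous_fderiv one_ne_zero).clm_apply continuous_const
  have hint : ∀ {f g : G → F}, Continuous f → Continuous g →
      (∀ x, u x = 0 → ⟪f x, g x⟫ = 0) → Integrable (fun x => ⟪f x, g x⟫) μ := fun hf hg hfg =>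
    (hf.inner hg).integrable_of_hasCompactSupport <| hsupp.mono fun x hx h0 => hx (hfg x h0)
  have hdiff : ∀ x, DifferentiableAt ℝ u x := fun x => hu.differentiable one_ne_zero x
  have hibp : ∫ x, ⟪u x, fderiv ℝ u x v⟫ ∂μ = -∫ x, ⟪fderiv ℝ u x v, u x⟫ ∂μ :=
    integral_bilinear_fderiv_right_eq_neg_left_of_integrable (B := innerSL ℝ (E := F))
      (hint hdu hu.continuous fun _ h => by simp [h])
      (hint hu.continuous hdu fun _ h => by simp [h])
      (hint hu.continuous hu.continuous fun _ h => by simp [h])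
      (fun x _ => hdiff x) (fun x _ => hdiff x)
  simp only [real_inner_comm (u _)] at hibp ⊢
  linarith

theorem cForm_self_eq_zero {d : ℕ} {Ω : Set (E d)} (a : E d) {u : E d → E d}
    (hu : ContDiff ℝ 1 u) (hsupp : HasCompactSupport u) (hsub : tsupport u ⊆ Ω) :
    cForm Ω a u u = 0 := by
  rw [cForm, setIntegral_eq_integral_of_forall_compl_eq_zero fun x hx => by
    simp [image_eq_zero_of_notMem_tsupport fun h => hx (hsub h)]]
  exact integral_inner_fderiv_self_eq_zero hu hsupp a

theorem continuous_divVisc {d : ℕ} (ν : ℝ) {u : E d → E d} (hu : ContDiff ℝ 2 u) :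
    Continuous (divVisc ν u) := by
  have hdu : ∀ k, ContDiff ℝ 1 fun y => fderiv ℝ u y (EuclideanSpace.single k 1) := fun k =>
    (hu.fderiv_right (by norm_num)).clm_apply contDiff_const
  have hsg : ∀ i j, ContDiff ℝ 1 fun y => 2 * ν * sg u y i j := fun i j => by
    unfold sg
    fun_prop
  exact (PiLp.continuous_toLp 2 _).comp <| continuous_pi fun i => continuous_finsetSum _
    fun j _ => ((hsg i j).continuous_fderiv one_ne_zero).clm_apply continuous_const

theorem stmt13_general (d : ℕ) (Ω : Set (E d)) (hΩb : Bornology.IsBounded Ω)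
    (a : E d) (ν τM τC : ℝ) (hτM : 0 < τM)
    (uh : E d → E d) (ph pt : E d → ℝ)
    (hu : ContDiff ℝ 2 uh) (hsupp : HasCompactSupport uh) (hsub : tsupport uh ⊆ Ω)
    (hpt : ContDiff ℝ 1 pt)
    (hK : kForm Ω ν uh uh ≥ ∫ x in Ω, τM * ‖divVisc ν uh x‖ ^ 2) :
    Ared Ω a ν τM τC uh ph pt uh ph pt ≥
      (1 / 4) * kForm Ω ν uh uh
        + (1 / 2) * (∫ x in Ω, τM * ‖adv a uh x + gradient pt x‖ ^ 2)
        + (1 / 4) * (∫ x in Ω, τM * ‖divVisc ν uh x‖ ^ 2)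
        + ∫ x in Ω, τC * (divg uh x) ^ 2 := by
  have hX : Continuous fun x => adv a uh x + gradient pt x :=
    ((hu.continuous_fderiv two_ne_zero).clm_apply continuous_const).add hpt.continuous_gradient
  have hV := continuous_divVisc ν hu
  have hstab := half_setIntegral_sub_le_setIntegral_inner_sub_self (μ := volume) hτM.le
    ((continuous_const.mul (hX.norm.pow 2)).integrableOn_of_isBounded hΩb)
    ((continuous_const.mul (hV.norm.pow 2)).integrableOn_of_isBounded hΩb)
    ((continuous_const.mul ((hX.sub hV).inner hX)).integrableOn_of_isBounded hΩb)
  simp only [add_sub_right_comm] at hstab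
  have hdiv : ∫ x in Ω, τC * (divg uh x * divg uh x) = ∫ x in Ω, τC * divg uh x ^ 2 := by
    simp only [sq]
  rw [Ared, cForm_self_eq_zero a (hu.of_le one_le_two) hsupp hsub, hdiv]
  linarith

/-- Coercivity step of the inf-sup stability lemma: on the diagonal, given the Young
inequality for the cross term and the inverse-estimate bound k(u^h,u^h) ≥
‖τ_M^{1/2}∇·(2ν∇^s u^h)‖², the reduced Oseen form is bounded below as stated. -/
theorem stmt13 (d : ℕ) (Ω : Set (E d)) (hΩo : IsOpen Ω) (hΩb : Bornology.IsBounded Ω)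
    (a : E d) (ν τM τC : ℝ) (hν : 0 < ν) (hτM : 0 < τM) (hτC : 0 < τC)
    (uh : E d → E d) (ph pt : E d → ℝ)
    (hu : ContDiff ℝ 2 uh) (hsupp : HasCompactSupport uh) (hsub : tsupport uh ⊆ Ω)
    (hpt : ContDiff ℝ 1 pt)
    (hYoung : (∫ x in Ω, τM * ⟪adv a uh x + gradient pt x, divVisc ν uh x⟫) ≥
      -(1 / 2) * (∫ x in Ω, τM * ‖adv a uh x + gradient pt x‖ ^ 2)
        - (1 / 2) * ∫ x in Ω, τM * ‖divVisc ν uh x‖ ^ 2)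
    (hK : kForm Ω ν uh uh ≥ ∫ x in Ω, τM * ‖divVisc ν uh x‖ ^ 2) :
    Ared Ω a ν τM τC uh ph pt uh ph pt ≥
      (1 / 4) * kForm Ω ν uh uh
        + (1 / 2) * (∫ x in Ω, τM * ‖adv a uh x + gradient pt x‖ ^ 2)
        + (1 / 4) * (∫ x in Ω, τM * ‖divVisc ν uh x‖ ^ 2)
        + ∫ x in Ω, τC * (divg uh x) ^ 2 :=
  stmt13_general d Ω hΩb a ν τM τC hτM uh ph pt hu hsupp hsub hpt hK
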